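/- Let a be a standard Gaussian random vector in R^N (a ∼ N(0, I_N)) and let x, y be unit vectors. Then √(π/2) · E[sign(⟨a, x⟩) · ⟨a, y⟩] = ⟨x, y⟩, where sign(t) = 1 if t > 0 and −1 otherwise. -/

import Mathlib

/-!
Write `y = ⟪x, y⟫ • x + z` with `z ⟂ x`. Since `⟪a, x⟫` is a standard Gaussian,
`E[sgn ⟪a, x⟫ * ⟪a, x⟫] = E|g| = √(2 / π)`. The reflection in the hyperplane `z⟂` preserves the
standard Gaussian measure, fixes `x` and negates `z`, so `E[sgn ⟪a, x⟫ * ⟪a, z⟫] = 0`.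
-/

open MeasureTheory ProbabilityTheory RealInnerProductSpace

/-- The standard Gaussian measure `N(0, I_N)` on `ℝ^N`. -/
noncomputable def stdGaussian (N : ℕ) : Measure (EuclideanSpace ℝ (Fin N)) :=
  (Measure.pi fun _ : Fin N => gaussianReal 0 1).map
    (MeasurableEquiv.toLp 2 (Fin N → ℝ))

/-- `sign(t) = 1` if `t > 0` and `-1` otherwise. -/
noncomputable def sgn (t : ℝ) : ℝ := if 0 < t then 1 else -1

open Real Set

lemma sgn_mul_self (t : ℝ) : sgn t * t = |t| := by
  unfold sgn
  split_ifs with h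
  · rw [one_mul, abs_of_pos h]
  · rw [neg_one_mul, abs_of_nonpos (not_lt.1 h)]

lemma abs_sgn (t : ℝ) : |sgn t| = 1 := by
  unfold sgn
  split_ifs <;> simp

lemma measurable_sgn : Measurable sgn :=
  Measurable.ite measurableSet_Ioi measurable_const measurable_const

lemma integral_Ioi_mul_exp_neg_mul_sq {b : ℝ} (hb : 0 < b) :
    ∫ x in Ioi (0 : ℝ), x * exp (-b * x ^ 2) = (2 * b)⁻¹ := by
  exact_mod_cast integral_mul_cexp_neg_mul_sq (b := (b : ℂ)) (by simpa using hb)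

lemma integral_abs_gaussianReal : ∫ t, |t| ∂gaussianReal 0 1 = √(2 / π) := by
  have hpdf (t : ℝ) :
      gaussianPDFReal 0 1 t • |t| = (√(2 * π))⁻¹ * (|t| * exp (-(1 / 2) * |t| ^ 2)) := by
    simp only [gaussianPDFReal, sq_abs, smul_eq_mul, NNReal.coe_one, mul_one, sub_zero]
    ring_nf
  have hsqrt2 : √2 * √2 = 2 := mul_self_sqrt zero_le_two
  simp_rw [integral_gaussianReal_eq_integral_smul one_ne_zero, hpdf, integral_const_mul]
  rw [integral_comp_abs (f := fun u => u * exp (-(1 / 2) * u ^ 2)),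
    integral_Ioi_mul_exp_neg_mul_sq one_half_pos, sqrt_mul zero_le_two, sqrt_div zero_le_two]
  field_simp
  linarith

section InnerProductSpace

variable {E : Type*} [NormedAddCommGroup E] [InnerProductSpace ℝ E] [FiniteDimensional ℝ E]
  [MeasurableSpace E] [BorelSpace E]

lemma map_inner_stdGaussian (x : E) :
    (stdGaussian E).map (⟪·, x⟫) = gaussianReal 0 (‖x‖₊ ^ 2) := by
  have hL : (⟪·, x⟫) = innerSL ℝ x := by
    ext a
    simp [real_inner_comm]
  rw [hL, IsGaussian.map_eq_gaussianReal, integral_strongDual_stdGaussian,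
    variance_dual_stdGaussian, innerSL_apply_norm, ← Real.toNNReal_coe (r := ‖x‖₊ ^ 2)]
  simp

lemma integral_comp_linearIsometryEquiv_stdGaussian {G : Type*} [NormedAddCommGroup G]
    [NormedSpace ℝ G] (R : E ≃ₗᵢ[ℝ] E) (f : E → G) :
    ∫ a, f (R a) ∂stdGaussian E = ∫ a, f a ∂stdGaussian E :=
  MeasurePreserving.integral_comp' (f := R.toHomeomorph.toMeasurableEquiv)
    ⟨R.continuous.measurable, stdGaussian_map R⟩ f

lemma integral_comp_inner_mul_inner_of_inner_eq_zero (f : ℝ → ℝ) {x z : E} (hxz : ⟪x, z⟫ = 0) :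
    ∫ a, f ⟪a, x⟫ * ⟪a, z⟫ ∂stdGaussian E = 0 := by
  set R := (ℝ ∙ z)ᗮ.reflection
  have hRx : R x = x :=
    Submodule.reflection_mem_subspace_eq_self (Submodule.mem_orthogonal_singleton_iff_inner_right.2
      (by rwa [real_inner_comm]))
  have hRz : R z = -z := Submodule.reflection_orthogonalComplement_singleton_eq_neg z
  have hflip (a w : E) : ⟪R a, w⟫ = ⟪a, R w⟫ := by
    rw [R.inner_map_eq_flip, Submodule.reflection_symm]
  have h := integral_comp_linearIsometryEquiv_stdGaussian R (fun a => f ⟪a, x⟫ * ⟪a, z⟫)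
  simp only [hflip, hRx, hRz, inner_neg_right, mul_neg, integral_neg] at h
  linarith

lemma integrable_sgn_inner_mul_inner (x y : E) :
    Integrable (fun a => sgn ⟪a, x⟫ * ⟪a, y⟫) (stdGaussian E) := by
  refine Integrable.bdd_mul (c := 1) ?_ ?_ (ae_of_all _ fun a => (abs_sgn _).le)
  · simpa [real_inner_comm] using IsGaussian.integrable_dual (stdGaussian E) (innerSL ℝ y)
  · exact (measurable_sgn.comp (by fun_prop)).aestronglyMeasurable

lemma integral_sgn_inner_mul_inner_self {x : E} (hx : ‖x‖ = 1) :
    ∫ a, sgn ⟪a, x⟫ * ⟪a, x⟫ ∂stdGaussian E = √(2 / π) := by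
  have hnn : ‖x‖₊ ^ 2 = 1 := by simp [← NNReal.coe_inj, hx]
  simp_rw [sgn_mul_self]
  rw [← integral_map (f := (|·|)) (by fun_prop) (by fun_prop), map_inner_stdGaussian, hnn,
    integral_abs_gaussianReal]

theorem integral_sgn_inner_mul_inner {x : E} (hx : ‖x‖ = 1) (y : E) :
    ∫ a, sgn ⟪a, x⟫ * ⟪a, y⟫ ∂stdGaussian E = √(2 / π) * ⟪x, y⟫ := by
  set z := y - ⟪x, y⟫ • x
  have hxz : ⟪x, z⟫ = 0 := by
    simp [z, inner_sub_right, real_inner_smul_right, hx]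
  have hsplit (a : E) :
      sgn ⟪a, x⟫ * ⟪a, y⟫ = ⟪x, y⟫ * (sgn ⟪a, x⟫ * ⟪a, x⟫) + sgn ⟪a, x⟫ * ⟪a, z⟫ := by
    simp only [z, inner_sub_right, real_inner_smul_right]
    ring
  simp_rw [hsplit]
  rw [integral_add ((integrable_sgn_inner_mul_inner x x).const_mul _)
      (integrable_sgn_inner_mul_inner x z), integral_const_mul,
    integral_sgn_inner_mul_inner_self hx, integral_comp_inner_mul_inner_of_inner_eq_zero _ hxz]
  ring

end InnerProductSpace

lemma stdGaussian_eq_stdGaussian_euclideanSpace (N : ℕ) :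
    _root_.stdGaussian N = ProbabilityTheory.stdGaussian (EuclideanSpace ℝ (Fin N)) :=
  map_pi_eq_stdGaussian

theorem stmt6_general {N : ℕ} (x y : EuclideanSpace ℝ (Fin N)) (hx : ‖x‖ = 1) :
    Real.sqrt (Real.pi / 2) * ∫ a, sgn ⟪a, x⟫ * ⟪a, y⟫ ∂(stdGaussian N) = ⟪x, y⟫ := by
  rw [stdGaussian_eq_stdGaussian_euclideanSpace, integral_sgn_inner_mul_inner hx, ← mul_assoc,
    ← sqrt_mul (by positivity), div_mul_div_comm, mul_comm π,
    div_self (by positivity), sqrt_one, one_mul]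

theorem stmt6 {N : ℕ} (x y : EuclideanSpace ℝ (Fin N)) (hx : ‖x‖ = 1) (hy : ‖y‖ = 1) :
    Real.sqrt (Real.pi / 2) * ∫ a, sgn ⟪a, x⟫ * ⟪a, y⟫ ∂(stdGaussian N) = ⟪x, y⟫ :=
  stmt6_general x y hx
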